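/- arXiv:2206.02944 — 2 statements merged into one kernel-verified Lean document; each statement's English description precedes it below -/
import Mathlib

section
/- The ideal of absolutely p-summing operators is maximal in the sense of local determination: for Banach spaces E, F and T ∈ L(E;F), T is absolutely p-summing if and only if sup{ π_p(Q_L ∘ T ∘ I_M) : M finite-dimensional subspace of E, L finite-codimensional closed subspace of F } is finite, and in that case π_p(T) equals this supremum. -/
/-- The weak `ℓ_p` norm of a finite sequence. -/
noncomputable def weakNormFin (𝕜 : Type*) [RCLike 𝕜] {E : Type*} [NormedAddCommGroup E]
    [NormedSpace 𝕜 E] (p : ℝ) {n : ℕ} (x : Fin n → E) : ℝ :=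
  ⨆ φ : {φ : E →L[𝕜] 𝕜 // ‖φ‖ ≤ 1}, (∑ j, ‖φ.1 (x j)‖ ^ p) ^ (1 / p)

/-- A linear map is absolutely `p`-summing: there is `C ≥ 0` with
`(∑ ‖T x_j‖^p)^{1/p} ≤ C · sup_{φ ∈ B_{E*}} (∑ |φ(x_j)|^p)^{1/p}` for all finite families. -/
def IsPSumming (𝕜 : Type*) [RCLike 𝕜] {E F : Type*} [NormedAddCommGroup E]
    [NormedSpace 𝕜 E] [SeminormedAddCommGroup F] [NormedSpace 𝕜 F] (p : ℝ)
    (T : E →ₗ[𝕜] F) : Prop :=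
  ∃ C : ℝ, 0 ≤ C ∧ ∀ (n : ℕ) (x : Fin n → E),
    (∑ j, ‖T (x j)‖ ^ p) ^ (1 / p) ≤ C * weakNormFin 𝕜 p x

/-- The `p`-summing norm `π_p(T)`: the least constant `C` in the defining inequality. -/
noncomputable def piNorm (𝕜 : Type*) [RCLike 𝕜] {E F : Type*} [NormedAddCommGroup E]
    [NormedSpace 𝕜 E] [SeminormedAddCommGroup F] [NormedSpace 𝕜 F] (p : ℝ)
    (T : E →ₗ[𝕜] F) : ℝ :=
  sInf {C : ℝ | 0 ≤ C ∧ ∀ (n : ℕ) (x : Fin n → E),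
    (∑ j, ‖T (x j)‖ ^ p) ^ (1 / p) ≤ C * weakNormFin 𝕜 p x}

/-- The set of local `p`-summing norms `π_p(Q_L ∘ T ∘ I_M)` where `M` runs over the
finite-dimensional subspaces of `E` and `L` over the finite-codimensional closed subspaces
of `F`. -/
noncomputable def localSet (𝕜 : Type*) [RCLike 𝕜] {E F : Type*} [NormedAddCommGroup E]
    [NormedSpace 𝕜 E] [NormedAddCommGroup F] [NormedSpace 𝕜 F] (p : ℝ)
    (T : E →L[𝕜] F) : Set ℝ :=
  {r : ℝ | ∃ (M : Submodule 𝕜 E) (L : Submodule 𝕜 F),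
    FiniteDimensional 𝕜 M ∧ IsClosed (L : Set F) ∧ FiniteDimensional 𝕜 (F ⧸ L) ∧
    r = piNorm 𝕜 p (L.mkQ.comp (T.toLinearMap.comp M.subtype))}

/-!
One inequality is the ideal property: `Q_L` is norm-nonincreasing, and by Hahn–Banach the weak
`ℓ_p` norm of a family in `M` is the same whether computed in `M` or in `E`. Conversely, given
`x_1, …, x_n ∈ E`, let `M` be their span and `L` the common kernel of norming functionals of the
`T x_j`, so that `‖Q_L T x_j‖ = ‖T x_j‖`. The local operator `Q_L ∘ T ∘ I_M` has finite-dimensional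
domain, hence is a finite sum of rank-one operators and thus `p`-summing; its summing inequality
for the `x_j` is the one for `T`, with constant at most the supremum.
-/

open Finset

section LpSums

variable {ι : Type*} [Fintype ι] {p : ℝ}

lemma sum_rpow_rpow_one_div_le (hp : 0 < p) {u v : ι → ℝ} (hu : ∀ i, 0 ≤ u i)
    (huv : ∀ i, u i ≤ v i) : (∑ i, u i ^ p) ^ (1 / p) ≤ (∑ i, v i ^ p) ^ (1 / p) :=
  Real.rpow_le_rpow (sum_nonneg fun i _ => Real.rpow_nonneg (hu i) p)
    (sum_le_sum fun i _ => Real.rpow_le_rpow (hu i) (huv i) hp.le) (by positivity)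

lemma sum_mul_rpow_rpow_one_div (hp : 0 < p) {u : ι → ℝ} (hu : ∀ i, 0 ≤ u i) {c : ℝ}
    (hc : 0 ≤ c) : (∑ i, (u i * c) ^ p) ^ (1 / p) = (∑ i, u i ^ p) ^ (1 / p) * c := by
  simp_rw [Real.mul_rpow (hu _) hc, ← sum_mul]
  rw [Real.mul_rpow (sum_nonneg fun i _ => Real.rpow_nonneg (hu i) p) (Real.rpow_nonneg hc p),
    one_div, Real.rpow_rpow_inv hc hp.ne']

end LpSums

section WeakNorm

variable {𝕜 : Type*} [RCLike 𝕜] {E : Type*} [NormedAddCommGroup E] [NormedSpace 𝕜 E] {p : ℝ}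

instance : Nonempty {φ : E →L[𝕜] 𝕜 // ‖φ‖ ≤ 1} := ⟨⟨0, by simp⟩⟩

lemma weakNormFin_bddAbove (hp : 0 < p) {n : ℕ} (x : Fin n → E) :
    BddAbove (Set.range fun φ : {φ : E →L[𝕜] 𝕜 // ‖φ‖ ≤ 1} =>
      (∑ j, ‖φ.1 (x j)‖ ^ p) ^ (1 / p)) := by
  refine ⟨(∑ j, ‖x j‖ ^ p) ^ (1 / p), ?_⟩
  rintro _ ⟨φ, rfl⟩
  exact sum_rpow_rpow_one_div_le hp (fun _ => norm_nonneg _) fun j =>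
    (φ.1.le_of_opNorm_le φ.2 _).trans_eq (one_mul _)

lemma le_weakNormFin (hp : 0 < p) {n : ℕ} (x : Fin n → E) {φ : E →L[𝕜] 𝕜} (hφ : ‖φ‖ ≤ 1) :
    (∑ j, ‖φ (x j)‖ ^ p) ^ (1 / p) ≤ weakNormFin 𝕜 p x :=
  le_ciSup (weakNormFin_bddAbove hp x) (⟨φ, hφ⟩ : {φ : E →L[𝕜] 𝕜 // ‖φ‖ ≤ 1})

lemma weakNormFin_nonneg {n : ℕ} (x : Fin n → E) : 0 ≤ weakNormFin 𝕜 p x :=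
  Real.iSup_nonneg fun _ => by positivity

lemma sum_rpow_rpow_one_div_le_opNorm_mul_weakNormFin (hp : 0 < p) {n : ℕ} (x : Fin n → E)
    (φ : E →L[𝕜] 𝕜) : (∑ j, ‖φ (x j)‖ ^ p) ^ (1 / p) ≤ ‖φ‖ * weakNormFin 𝕜 p x := by
  set ψ : E →L[𝕜] 𝕜 := ((‖φ‖⁻¹ : ℝ) : 𝕜) • φ
  have hψ : ‖ψ‖ ≤ 1 := by
    rw [norm_smul, RCLike.norm_ofReal, abs_inv, abs_norm]
    exact inv_mul_le_one_of_le₀ le_rfl (norm_nonneg _)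
  have hφψ (y : E) : ‖φ y‖ = ‖ψ y‖ * ‖φ‖ := by
    rcases eq_or_ne ‖φ‖ 0 with h | h
    · simp [norm_eq_zero.1 h]
    · simp only [ψ, smul_apply, norm_smul, RCLike.norm_ofReal, abs_inv,
        abs_norm]
      field_simp
  calc (∑ j, ‖φ (x j)‖ ^ p) ^ (1 / p) = (∑ j, ‖ψ (x j)‖ ^ p) ^ (1 / p) * ‖φ‖ := by
        simp_rw [hφψ]
        exact sum_mul_rpow_rpow_one_div hp (fun _ => norm_nonneg _) (norm_nonneg _)
    _ ≤ weakNormFin 𝕜 p x * ‖φ‖ := by gcongr; exact le_weakNormFin hp x hψ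
    _ = ‖φ‖ * weakNormFin 𝕜 p x := mul_comm _ _

lemma weakNormFin_subtype (hp : 0 < p) (M : Submodule 𝕜 E) {n : ℕ} (x : Fin n → M) :
    weakNormFin 𝕜 p (fun j => (x j : E)) = weakNormFin 𝕜 p x := by
  refine le_antisymm (ciSup_le fun φ => ?_) (ciSup_le fun φ => ?_)
  · exact le_weakNormFin hp x (φ := φ.1.comp M.subtypeL)
      ((φ.1.opNorm_comp_le _).trans (mul_le_one₀ φ.2 (norm_nonneg _) M.norm_subtypeL_le))
  · obtain ⟨g, hg, hgφ⟩ := exists_extension_norm_eq M φ.1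
    simpa only [hg] using le_weakNormFin hp (fun j => (x j : E)) (hgφ.trans_le φ.2)

end WeakNorm

section PSumming

variable {𝕜 : Type*} [RCLike 𝕜] {E F : Type*} [NormedAddCommGroup E] [NormedSpace 𝕜 E]
  [SeminormedAddCommGroup F] [NormedSpace 𝕜 F] {p : ℝ}

lemma piNorm_nonneg {T : E →ₗ[𝕜] F} (hT : IsPSumming 𝕜 p T) : 0 ≤ piNorm 𝕜 p T :=
  le_csInf hT fun _ hC => hC.1

lemma piNorm_le {T : E →ₗ[𝕜] F} {C : ℝ} (hC : 0 ≤ C)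
    (h : ∀ (n : ℕ) (x : Fin n → E), (∑ j, ‖T (x j)‖ ^ p) ^ (1 / p) ≤ C * weakNormFin 𝕜 p x) :
    piNorm 𝕜 p T ≤ C :=
  csInf_le ⟨0, fun _ hD => hD.1⟩ ⟨hC, h⟩

lemma IsPSumming.le_piNorm_mul {T : E →ₗ[𝕜] F} (hT : IsPSumming 𝕜 p T) {n : ℕ}
    (x : Fin n → E) :
    (∑ j, ‖T (x j)‖ ^ p) ^ (1 / p) ≤ piNorm 𝕜 p T * weakNormFin 𝕜 p x := by
  rcases (weakNormFin_nonneg (𝕜 := 𝕜) (p := p) x).eq_or_lt with hw | hw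
  · obtain ⟨C, -, hC⟩ := hT
    simpa only [← hw, mul_zero] using hC n x
  · rw [← div_le_iff₀ hw]
    exact le_csInf hT fun C hC => (div_le_iff₀ hw).2 (hC.2 n x)

lemma isPSumming_zero (hp : 0 < p) : IsPSumming 𝕜 p (0 : E →ₗ[𝕜] F) :=
  ⟨0, le_rfl, fun n x => by simp [Real.zero_rpow, hp.ne']⟩

lemma piNorm_zero (hp : 0 < p) : piNorm 𝕜 p (0 : E →ₗ[𝕜] F) = 0 :=
  le_antisymm (piNorm_le le_rfl fun n x => by simp [Real.zero_rpow, hp.ne'])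
    (piNorm_nonneg (isPSumming_zero hp))

lemma IsPSumming.add (hp : 1 ≤ p) {S T : E →ₗ[𝕜] F} (hS : IsPSumming 𝕜 p S)
    (hT : IsPSumming 𝕜 p T) : IsPSumming 𝕜 p (S + T) := by
  obtain ⟨C, hC0, hC⟩ := hS
  obtain ⟨D, hD0, hD⟩ := hT
  refine ⟨C + D, add_nonneg hC0 hD0, fun n x => ?_⟩
  calc (∑ j, ‖(S + T) (x j)‖ ^ p) ^ (1 / p)
      ≤ (∑ j, |‖S (x j)‖ + ‖T (x j)‖| ^ p) ^ (1 / p) :=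
        sum_rpow_rpow_one_div_le (by linarith) (fun _ => norm_nonneg _) fun j =>
          (norm_add_le _ _).trans (le_abs_self _)
    _ ≤ (∑ j, |‖S (x j)‖| ^ p) ^ (1 / p) + (∑ j, |‖T (x j)‖| ^ p) ^ (1 / p) :=
        Real.Lp_add_le _ _ _ hp
    _ ≤ C * weakNormFin 𝕜 p x + D * weakNormFin 𝕜 p x := by
        simp only [abs_norm]
        exact add_le_add (hC n x) (hD n x)
    _ = (C + D) * weakNormFin 𝕜 p x := (add_mul _ _ _).symm

lemma isPSumming_sum (hp : 1 ≤ p) {ι : Type*} (s : Finset ι) {T : ι → E →ₗ[𝕜] F}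
    (hT : ∀ i ∈ s, IsPSumming 𝕜 p (T i)) : IsPSumming 𝕜 p (∑ i ∈ s, T i) :=
  sum_induction T (IsPSumming 𝕜 p) (fun _ _ => IsPSumming.add hp)
    (isPSumming_zero (by linarith)) hT

lemma isPSumming_smulRight (hp : 0 < p) (φ : E →L[𝕜] 𝕜) (y : F) :
    IsPSumming 𝕜 p ((φ : E →ₗ[𝕜] 𝕜).smulRight y) := by
  refine ⟨‖y‖ * ‖φ‖, by positivity, fun n x => ?_⟩
  simp only [LinearMap.smulRight_apply, ContinuousLinearMap.coe_coe, norm_smul]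
  rw [sum_mul_rpow_rpow_one_div hp (fun _ => norm_nonneg _) (norm_nonneg y), mul_comm, mul_assoc]
  exact mul_le_mul_of_nonneg_left
    (sum_rpow_rpow_one_div_le_opNorm_mul_weakNormFin hp x φ) (norm_nonneg y)

lemma isPSumming_of_finiteDimensional (hp : 1 ≤ p) {M : Type*} [NormedAddCommGroup M]
    [NormedSpace 𝕜 M] [FiniteDimensional 𝕜 M] (S : M →ₗ[𝕜] F) : IsPSumming 𝕜 p S := by
  let b := Module.finBasis 𝕜 M
  have hS : S = ∑ i, (b.coord i).smulRight (S (b i)) :=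
    b.ext fun i => by simp [LinearMap.sum_apply, Finsupp.single_apply]
  rw [hS]
  refine isPSumming_sum hp _ fun i _ => ?_
  simpa using isPSumming_smulRight (by linarith) (LinearMap.toContinuousLinearMap (b.coord i))
    (S (b i))

lemma IsPSumming.piNorm_comp_comp_subtype_le {G : Type*} [SeminormedAddCommGroup G]
    [NormedSpace 𝕜 G] (hp : 0 < p) {T : E →ₗ[𝕜] F} (hT : IsPSumming 𝕜 p T) (A : F →ₗ[𝕜] G)
    (hA : ∀ y, ‖A y‖ ≤ ‖y‖) (M : Submodule 𝕜 E) :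
    piNorm 𝕜 p (A ∘ₗ T ∘ₗ M.subtype) ≤ piNorm 𝕜 p T := by
  refine piNorm_le (piNorm_nonneg hT) fun n x => ?_
  calc (∑ j, ‖(A ∘ₗ T ∘ₗ M.subtype) (x j)‖ ^ p) ^ (1 / p)
      ≤ (∑ j, ‖T (x j)‖ ^ p) ^ (1 / p) :=
        sum_rpow_rpow_one_div_le hp (fun _ => norm_nonneg _) fun j => hA _
    _ ≤ piNorm 𝕜 p T * weakNormFin 𝕜 p (fun j => (x j : E)) := hT.le_piNorm_mul _
    _ = piNorm 𝕜 p T * weakNormFin 𝕜 p x := by rw [weakNormFin_subtype hp]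

lemma norm_apply_le_opNorm_mul_norm_mkQ {L : Submodule 𝕜 F} {ψ : F →L[𝕜] 𝕜}
    (hL : L ≤ ψ.ker) (y : F) : ‖ψ y‖ ≤ ‖ψ‖ * ‖L.mkQ y‖ := by
  have : Nonempty (L : Set F) := ⟨⟨0, L.zero_mem⟩⟩
  rw [show ‖L.mkQ y‖ = Metric.infDist y L from QuotientAddGroup.norm_mk (S := L.toAddSubgroup) y,
    Metric.infDist_eq_iInf, Real.mul_iInf_of_nonneg (norm_nonneg _)]
  refine le_ciInf fun m => ?_
  have hm : ψ m = 0 := hL m.2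
  calc ‖ψ y‖ = ‖ψ (y - m)‖ := by rw [map_sub, hm, sub_zero]
    _ ≤ ‖ψ‖ * dist y m := (ψ.le_opNorm _).trans_eq (by rw [dist_eq_norm])

end PSumming

section Local

variable {𝕜 : Type*} [RCLike 𝕜] {E F : Type*} [NormedAddCommGroup E] [NormedSpace 𝕜 E]
  [NormedAddCommGroup F] [NormedSpace 𝕜 F] {p : ℝ}

lemma exists_isClosed_finiteDimensional_quotient_norm_mkQ_eq {n : ℕ} (y : Fin n → F) :
    ∃ L : Submodule 𝕜 F, IsClosed (L : Set F) ∧ FiniteDimensional 𝕜 (F ⧸ L) ∧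
      ∀ j, ‖L.mkQ (y j)‖ = ‖y j‖ := by
  choose ψ hψ1 hψy using fun j => exists_dual_vector'' 𝕜 (y j)
  let Ψ : F →L[𝕜] (Fin n → 𝕜) := ContinuousLinearMap.pi ψ
  refine ⟨LinearMap.ker (Ψ : F →ₗ[𝕜] Fin n → 𝕜), Ψ.isClosed_ker,
    Module.Finite.equiv (LinearMap.quotKerEquivRange _).symm, fun j => ?_⟩
  refine le_antisymm (Submodule.Quotient.norm_mk_le _ _) ?_
  have hker : LinearMap.ker (Ψ : F →ₗ[𝕜] Fin n → 𝕜) ≤ (ψ j).ker := fun z hz =>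
    congrFun hz j
  calc ‖y j‖ = ‖ψ j (y j)‖ := by rw [hψy, RCLike.norm_ofReal, abs_norm]
    _ ≤ ‖ψ j‖ * ‖(LinearMap.ker (Ψ : F →ₗ[𝕜] Fin n → 𝕜)).mkQ (y j)‖ :=
        norm_apply_le_opNorm_mul_norm_mkQ hker _
    _ ≤ _ := mul_le_of_le_one_left (norm_nonneg _) (hψ1 j)

lemma zero_mem_localSet (hp : 0 < p) (T : E →L[𝕜] F) : (0 : ℝ) ∈ localSet 𝕜 p T := by
  have : Subsingleton (F ⧸ (⊤ : Submodule 𝕜 F)) := Submodule.Quotient.subsingleton_iff.mpr rfl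
  refine ⟨⊥, ⊤, inferInstance, isClosed_univ, inferInstance, ?_⟩
  rw [show (⊤ : Submodule 𝕜 F).mkQ ∘ₗ T.toLinearMap ∘ₗ (⊥ : Submodule 𝕜 E).subtype = 0 from
    LinearMap.ext fun _ => Subsingleton.elim _ _, piNorm_zero hp]

lemma piNorm_mem_upperBounds_localSet (hp : 0 < p) {T : E →L[𝕜] F}
    (hT : IsPSumming 𝕜 p T.toLinearMap) :
    piNorm 𝕜 p T.toLinearMap ∈ upperBounds (localSet 𝕜 p T) := by
  rintro _ ⟨M, L, -, -, -, rfl⟩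
  exact hT.piNorm_comp_comp_subtype_le hp L.mkQ (Submodule.Quotient.norm_mk_le L) M

lemma sum_rpow_rpow_one_div_le_sSup_localSet_mul (hp : 1 ≤ p) {T : E →L[𝕜] F}
    (hT : BddAbove (localSet 𝕜 p T)) {n : ℕ} (x : Fin n → E) :
    (∑ j, ‖T (x j)‖ ^ p) ^ (1 / p) ≤ sSup (localSet 𝕜 p T) * weakNormFin 𝕜 p x := by
  obtain ⟨L, hLc, hLf, hL⟩ :=
    exists_isClosed_finiteDimensional_quotient_norm_mkQ_eq (𝕜 := 𝕜) fun j => T (x j)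
  let M := Submodule.span 𝕜 (Set.range x)
  have hM : FiniteDimensional 𝕜 M := FiniteDimensional.span_of_finite 𝕜 (Set.finite_range x)
  let S := L.mkQ ∘ₗ T.toLinearMap ∘ₗ M.subtype
  let y : Fin n → M := fun j => ⟨x j, Submodule.subset_span ⟨j, rfl⟩⟩
  calc (∑ j, ‖T (x j)‖ ^ p) ^ (1 / p) = (∑ j, ‖S (y j)‖ ^ p) ^ (1 / p) := by
        simp_rw [← hL]; rfl
    _ ≤ piNorm 𝕜 p S * weakNormFin 𝕜 p y :=
        (isPSumming_of_finiteDimensional hp S).le_piNorm_mul y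
    _ = piNorm 𝕜 p S * weakNormFin 𝕜 p x := by
        rw [← weakNormFin_subtype (zero_lt_one.trans_le hp)]
    _ ≤ sSup (localSet 𝕜 p T) * weakNormFin 𝕜 p x := by
        gcongr
        · exact weakNormFin_nonneg x
        · exact le_csSup hT ⟨M, L, hM, hLc, hLf, rfl⟩

end Local

theorem stmt_17_general {𝕜 : Type*} [RCLike 𝕜] {E F : Type*} [NormedAddCommGroup E] [NormedSpace 𝕜 E]
    [NormedAddCommGroup F] [NormedSpace 𝕜 F]
    (p : ℝ) (hp : 1 ≤ p) (T : E →L[𝕜] F) :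
    (IsPSumming 𝕜 p T.toLinearMap ↔ BddAbove (localSet 𝕜 p T)) ∧
      (IsPSumming 𝕜 p T.toLinearMap →
        piNorm 𝕜 p T.toLinearMap = sSup (localSet 𝕜 p T)) := by
  have hp0 : 0 < p := zero_lt_one.trans_le hp
  have h0 := zero_mem_localSet hp0 T
  have hbdd (hT : IsPSumming 𝕜 p T.toLinearMap) : BddAbove (localSet 𝕜 p T) :=
    ⟨_, piNorm_mem_upperBounds_localSet hp0 hT⟩
  have hsum (hB : BddAbove (localSet 𝕜 p T)) (n : ℕ) (x : Fin n → E) :=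
    sum_rpow_rpow_one_div_le_sSup_localSet_mul hp hB x
  refine ⟨⟨hbdd, fun hB => ⟨_, le_csSup hB h0, hsum hB⟩⟩, fun hT => ?_⟩
  exact le_antisymm (piNorm_le (le_csSup (hbdd hT) h0) (hsum (hbdd hT)))
    (csSup_le ⟨0, h0⟩ (piNorm_mem_upperBounds_localSet hp0 hT))

/-- The ideal of absolutely `p`-summing operators is maximal (local determination):
`T` is `p`-summing iff `sup { π_p(Q_L ∘ T ∘ I_M) }` over finite-dimensional `M ⊆ E` and
finite-codimensional closed `L ⊆ F` is finite, and then `π_p(T)` equals this supremum. -/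
theorem stmt_17 {𝕜 : Type*} [RCLike 𝕜] {E F : Type*} [NormedAddCommGroup E] [NormedSpace 𝕜 E]
    [NormedAddCommGroup F] [NormedSpace 𝕜 F] [CompleteSpace E] [CompleteSpace F]
    (p : ℝ) (hp : 1 ≤ p) (T : E →L[𝕜] F) :
    (IsPSumming 𝕜 p T.toLinearMap ↔ BddAbove (localSet 𝕜 p T)) ∧
      (IsPSumming 𝕜 p T.toLinearMap →
        piNorm 𝕜 p T.toLinearMap = sSup (localSet 𝕜 p T)) :=
  stmt_17_general p hp T
end

section
/- The dual of the class of weakly p-summable sequences is the class of Cohen strongly p*-summable sequences: for 1 < p < ∞ with 1/p + 1/p* = 1 and any Banach space E, a sequence (x_j) in E satisfies sup_{(φ_j) ∈ B_{ℓ_p^w(E*)}} Σ_j |φ_j(x_j)| < ∞ if and only if (x_j) is Cohen strongly p*-summable, i.e. Σ_j |φ_j(x_j)| < ∞ for all weakly p-summable (φ_j) in E*, and the two natural norms coincide. -/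
/-- A sequence `x` in `E` is weakly `p`-summable. -/
def WeaklySummable (𝕜 : Type*) [RCLike 𝕜] {E : Type*} [NormedAddCommGroup E]
    [NormedSpace 𝕜 E] (p : ℝ) (x : ℕ → E) : Prop :=
  ∀ φ : E →L[𝕜] 𝕜, Summable fun j => ‖φ (x j)‖ ^ p

/-- The weak `ℓ_p` norm of a sequence. -/
noncomputable def weakNorm (𝕜 : Type*) [RCLike 𝕜] {E : Type*} [NormedAddCommGroup E]
    [NormedSpace 𝕜 E] (p : ℝ) (x : ℕ → E) : ℝ :=
  ⨆ φ : {φ : E →L[𝕜] 𝕜 // ‖φ‖ ≤ 1}, (∑' j, ‖φ.1 (x j)‖ ^ p) ^ (1 / p)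

/-- The Cohen-type pairing set: partial sums `∑_{j<n} |φ_j(x_j)|` with `(φ_j)` in the unit
ball of `ℓ_p^w(E*)`; its supremum is the Cohen strong `p*`-norm of `x`. -/
def cohenSet (𝕜 : Type*) [RCLike 𝕜] {E : Type*} [NormedAddCommGroup E]
    [NormedSpace 𝕜 E] (p : ℝ) (x : ℕ → E) : Set ℝ :=
  {r : ℝ | ∃ φ : ℕ → (E →L[𝕜] 𝕜), WeaklySummable 𝕜 p φ ∧ weakNorm 𝕜 p φ ≤ 1 ∧
    ∃ n : ℕ, r = ∑ j ∈ Finset.range n, ‖(φ j) (x j)‖}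

/-- The dual-class pairing set: partial sums `|∑_{j<n} φ_j(x_j)|` with `(φ_j)` in the unit
ball of `ℓ_p^w(E*)`; its supremum is the `(ℓ_p^w)^{dual}`-norm of `x`. -/
def dualSet (𝕜 : Type*) [RCLike 𝕜] {E : Type*} [NormedAddCommGroup E]
    [NormedSpace 𝕜 E] (p : ℝ) (x : ℕ → E) : Set ℝ :=
  {r : ℝ | ∃ φ : ℕ → (E →L[𝕜] 𝕜), WeaklySummable 𝕜 p φ ∧ weakNorm 𝕜 p φ ≤ 1 ∧
    ∃ n : ℕ, r = ‖∑ j ∈ Finset.range n, (φ j) (x j)‖}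

/-!
Write `Sₙ φ = weakSection 𝕜 p φ n : F* → ℓ_p` for `Φ ↦ (Φ (φ 0), …, Φ (φ (n - 1)), 0, …)`. By
Banach–Steinhaus, `φ` is weakly `p`-summable iff `supₙ ‖Sₙ φ‖ < ∞`, and it lies in the unit ball
(`weakNorm φ ≤ 1`) iff `‖Sₙ φ‖ ≤ 1` for all `n`. This description of the unit ball of `ℓ_p^w`
shows that it is stable under multiplying the terms by unimodular scalars and under absolutely
convergent series.

Rotating every `φ j` so that `φ j (x j) ≥ 0` turns `|∑ φ j (x j)|` into `∑ |φ j (x j)|`, so the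
two suprema agree. A bound on the Cohen set gives summability after rescaling `φ` into the unit
ball. Conversely, if the Cohen set is unbounded, choose rotated `ψ k` in the unit ball with a
partial sum `∑_{j < m k} |ψ k j (x j)| > k 2ᵏ`; the sequence `φ = ∑ₖ 2⁻ᵏ ψ k` is then weakly
summable, yet the partial sums of `∑ⱼ |φ j (x j)|` exceed every `k`.
-/

open scoped ENNReal
open Finset

lemma ENNReal.toReal_pos_of_one_le {p : ℝ≥0∞} (hp1 : 1 ≤ p) (hp : p ≠ ∞) : 0 < p.toReal :=
  ENNReal.toReal_pos (zero_lt_one.trans_le hp1).ne' hp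

section weakSection

variable (𝕜 : Type*) [RCLike 𝕜] {F : Type*} [NormedAddCommGroup F] [NormedSpace 𝕜 F]
  (p : ℝ≥0∞) [Fact (1 ≤ p)]

noncomputable def weakSection (φ : ℕ → F) (n : ℕ) : (F →L[𝕜] 𝕜) →L[𝕜] lp (fun _ : ℕ => 𝕜) p :=
  ∑ j ∈ range n,
    (lp.singleContinuousLinearMap 𝕜 (fun _ : ℕ => 𝕜) p j).comp (ContinuousLinearMap.apply 𝕜 𝕜 (φ j))

variable {𝕜 p}

lemma weakSection_apply (φ : ℕ → F) (n : ℕ) (Φ : F →L[𝕜] 𝕜) :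
    weakSection 𝕜 p φ n Φ = ∑ j ∈ range n, lp.single p j (Φ (φ j)) := by
  simp [weakSection]

lemma weakSection_apply_apply (φ : ℕ → F) (n : ℕ) (Φ : F →L[𝕜] 𝕜) (i : ℕ) :
    weakSection 𝕜 p φ n Φ i = if i < n then Φ (φ i) else 0 := by
  rw [weakSection_apply, lp.coeFn_sum, Finset.sum_apply]
  simp [lp.single_apply, Pi.single_apply]

lemma norm_weakSection_apply_rpow (hp : p ≠ ∞) (φ : ℕ → F) (n : ℕ) (Φ : F →L[𝕜] 𝕜) :
    ‖weakSection 𝕜 p φ n Φ‖ ^ p.toReal = ∑ j ∈ range n, ‖Φ (φ j)‖ ^ p.toReal := by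
  rw [weakSection_apply]
  exact lp.norm_sum_single (ENNReal.toReal_pos_of_one_le Fact.out hp) _ _

lemma norm_weakSection_apply_le_iff (hp : p ≠ ∞) (φ : ℕ → F) (n : ℕ) (Φ : F →L[𝕜] 𝕜) {B : ℝ}
    (hB : 0 ≤ B) :
    ‖weakSection 𝕜 p φ n Φ‖ ≤ B ↔ ∑ j ∈ range n, ‖Φ (φ j)‖ ^ p.toReal ≤ B ^ p.toReal := by
  rw [← norm_weakSection_apply_rpow hp,
    Real.rpow_le_rpow_iff (norm_nonneg _) hB (ENNReal.toReal_pos_of_one_le Fact.out hp)]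

lemma summable_and_tsum_rpow_le_iff (hp : p ≠ ∞) (φ : ℕ → F) (Φ : F →L[𝕜] 𝕜) {B : ℝ}
    (hB : 0 ≤ B) :
    (Summable (fun j => ‖Φ (φ j)‖ ^ p.toReal) ∧
        (∑' j, ‖Φ (φ j)‖ ^ p.toReal) ^ (1 / p.toReal) ≤ B) ↔
      ∀ n, ‖weakSection 𝕜 p φ n Φ‖ ≤ B := by
  have hterm : ∀ j, 0 ≤ ‖Φ (φ j)‖ ^ p.toReal := fun j => by positivity
  simp only [norm_weakSection_apply_le_iff hp φ _ Φ hB, one_div,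
    Real.rpow_inv_le_iff_of_pos (tsum_nonneg hterm) hB
      (ENNReal.toReal_pos_of_one_le Fact.out hp)]
  constructor
  · rintro ⟨hs, h⟩ n
    exact (hs.sum_le_tsum _ fun j _ => hterm j).trans h
  · intro h
    exact ⟨summable_of_sum_range_le hterm h, Real.tsum_le_of_sum_range_le hterm h⟩

theorem weaklySummable_iff_exists_norm_weakSection_le (hp : p ≠ ∞) {φ : ℕ → F} :
    WeaklySummable 𝕜 p.toReal φ ↔ ∃ C, ∀ n, ‖weakSection 𝕜 p φ n‖ ≤ C := by
  refine ⟨fun h => banach_steinhaus fun Φ =>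
    ⟨_, (summable_and_tsum_rpow_le_iff hp φ Φ (by positivity)).1 ⟨h Φ, le_rfl⟩⟩, ?_⟩
  rintro ⟨C, hC⟩ Φ
  have hC0 : 0 ≤ C := (ContinuousLinearMap.opNorm_nonneg _).trans (hC 0)
  refine ((summable_and_tsum_rpow_le_iff hp φ Φ (B := C * ‖Φ‖) (by positivity)).2 fun n => ?_).1
  calc ‖weakSection 𝕜 p φ n Φ‖ ≤ ‖weakSection 𝕜 p φ n‖ * ‖Φ‖ := (weakSection 𝕜 p φ n).le_opNorm _
    _ ≤ C * ‖Φ‖ := by gcongr; exact hC n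

theorem weaklySummable_and_weakNorm_le_one_iff (hp : p ≠ ∞) {φ : ℕ → F} :
    WeaklySummable 𝕜 p.toReal φ ∧ weakNorm 𝕜 p.toReal φ ≤ 1 ↔
      ∀ n, ‖weakSection 𝕜 p φ n‖ ≤ 1 := by
  constructor
  · rintro ⟨hs, hnorm⟩ n
    obtain ⟨C, hC⟩ := (weaklySummable_iff_exists_norm_weakSection_le hp).1 hs
    have hC0 : 0 ≤ C := (ContinuousLinearMap.opNorm_nonneg _).trans (hC 0)
    have hbdd : BddAbove (Set.range fun Ψ : {Ψ : F →L[𝕜] 𝕜 // ‖Ψ‖ ≤ 1} =>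
        (∑' j, ‖Ψ.1 (φ j)‖ ^ p.toReal) ^ (1 / p.toReal)) := by
      refine ⟨C, Set.forall_mem_range.2 fun Ψ =>
        ((summable_and_tsum_rpow_le_iff hp φ Ψ.1 hC0).2 fun m => ?_).2⟩
      calc ‖weakSection 𝕜 p φ m Ψ.1‖ ≤ ‖weakSection 𝕜 p φ m‖ * ‖Ψ.1‖ :=
            (weakSection 𝕜 p φ m).le_opNorm _
        _ ≤ C * ‖Ψ.1‖ := by gcongr; exact hC m
        _ ≤ C := mul_le_of_le_one_right hC0 Ψ.2
    refine ContinuousLinearMap.opNorm_le_of_unit_norm zero_le_one fun Φ hΦ => ?_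
    exact (summable_and_tsum_rpow_le_iff hp φ Φ zero_le_one).1
      ⟨hs Φ, (le_ciSup hbdd ⟨Φ, hΦ.le⟩).trans hnorm⟩ n
  · intro h
    have hΦ : ∀ (Φ : F →L[𝕜] 𝕜) n, ‖weakSection 𝕜 p φ n Φ‖ ≤ ‖Φ‖ := fun Φ n =>
      ((weakSection 𝕜 p φ n).le_opNorm Φ).trans (mul_le_of_le_one_left (norm_nonneg _) (h n))
    refine ⟨fun Φ => ((summable_and_tsum_rpow_le_iff hp φ Φ (norm_nonneg Φ)).2 (hΦ Φ)).1, ?_⟩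
    have : Nonempty {Ψ : F →L[𝕜] 𝕜 // ‖Ψ‖ ≤ 1} := ⟨⟨0, by simp⟩⟩
    exact ciSup_le fun Ψ =>
      ((summable_and_tsum_rpow_le_iff hp φ Ψ.1 zero_le_one).2 fun n => (hΦ Ψ.1 n).trans Ψ.2).2

lemma norm_weakSection_smul_le {φ : ℕ → F} {u : ℕ → 𝕜} {r : ℝ} (hu : ∀ j, ‖u j‖ ≤ r) (n : ℕ) :
    ‖weakSection 𝕜 p (fun j => u j • φ j) n‖ ≤ r * ‖weakSection 𝕜 p φ n‖ := by
  have hr : 0 ≤ r := (norm_nonneg _).trans (hu 0)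
  refine ContinuousLinearMap.opNorm_le_bound _ (by positivity) fun Φ => ?_
  have hcoord : ∀ i, ‖weakSection 𝕜 p (fun j => u j • φ j) n Φ i‖ ≤
      ‖((r : 𝕜) • weakSection 𝕜 p φ n Φ) i‖ := fun i => by
    simp only [weakSection_apply_apply, lp.coeFn_smul, Pi.smul_apply, map_smul]
    split_ifs
    · rw [norm_smul, norm_smul, RCLike.norm_ofReal, abs_of_nonneg hr]
      gcongr
      exact hu i
    · simp
  calc ‖weakSection 𝕜 p (fun j => u j • φ j) n Φ‖ ≤ ‖(r : 𝕜) • weakSection 𝕜 p φ n Φ‖ :=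
        lp.norm_mono (zero_lt_one.trans_le Fact.out).ne' hcoord
    _ = r * ‖weakSection 𝕜 p φ n Φ‖ := by rw [norm_smul, RCLike.norm_ofReal, abs_of_nonneg hr]
    _ ≤ r * (‖weakSection 𝕜 p φ n‖ * ‖Φ‖) := by gcongr; exact (weakSection 𝕜 p φ n).le_opNorm Φ
    _ = r * ‖weakSection 𝕜 p φ n‖ * ‖Φ‖ := (mul_assoc _ _ _).symm

lemma norm_le_of_forall_norm_weakSection_le {φ : ℕ → F} {C : ℝ}
    (h : ∀ n, ‖weakSection 𝕜 p φ n‖ ≤ C) (j : ℕ) : ‖φ j‖ ≤ C := by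
  refine NormedSpace.norm_le_dual_bound 𝕜 (φ j)
    ((ContinuousLinearMap.opNorm_nonneg _).trans (h 0)) fun Φ => ?_
  calc ‖Φ (φ j)‖ = ‖weakSection 𝕜 p φ (j + 1) Φ j‖ := by
        rw [weakSection_apply_apply, if_pos j.lt_succ_self]
    _ ≤ ‖weakSection 𝕜 p φ (j + 1) Φ‖ :=
        lp.norm_apply_le_norm (zero_lt_one.trans_le Fact.out).ne' _ _
    _ ≤ ‖weakSection 𝕜 p φ (j + 1)‖ * ‖Φ‖ := (weakSection 𝕜 p φ (j + 1)).le_opNorm Φ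
    _ ≤ C * ‖Φ‖ := by gcongr; exact h _

lemma weakSection_tsum_apply {a : ℕ → ℕ → F} (ha : ∀ j, Summable fun k => a k j) (n : ℕ)
    (Φ : F →L[𝕜] 𝕜) :
    weakSection 𝕜 p (fun j => ∑' k, a k j) n Φ = ∑' k, weakSection 𝕜 p (a k) n Φ := by
  simp only [weakSection_apply, Φ.map_tsum (ha _), ← lp.singleContinuousLinearMap_apply (𝕜 := 𝕜),
    ContinuousLinearMap.map_tsum _ ((ha _).mapL Φ)]
  exact (Summable.tsum_finsetSum fun j _ => ((ha j).mapL Φ).mapL _).symm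

lemma summable_of_norm_weakSection_le [CompleteSpace F] {a : ℕ → ℕ → F} {c : ℕ → ℝ}
    (hc : Summable c) (ha : ∀ k n, ‖weakSection 𝕜 p (a k) n‖ ≤ c k) (j : ℕ) :
    Summable fun k => a k j :=
  hc.of_norm_bounded fun k => norm_le_of_forall_norm_weakSection_le (ha k) j

lemma norm_weakSection_tsum_le [CompleteSpace F] {a : ℕ → ℕ → F} {c : ℕ → ℝ} {s : ℝ}
    (hc : HasSum c s) (ha : ∀ k n, ‖weakSection 𝕜 p (a k) n‖ ≤ c k) (n : ℕ) :
    ‖weakSection 𝕜 p (fun j => ∑' k, a k j) n‖ ≤ s := by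
  have hs : 0 ≤ s := hc.nonneg fun k => (ContinuousLinearMap.opNorm_nonneg _).trans (ha k 0)
  refine ContinuousLinearMap.opNorm_le_bound _ hs fun Φ => ?_
  rw [weakSection_tsum_apply (summable_of_norm_weakSection_le hc.summable ha)]
  refine tsum_of_norm_bounded (hc.mul_right ‖Φ‖) fun k => ?_
  calc ‖weakSection 𝕜 p (a k) n Φ‖ ≤ ‖weakSection 𝕜 p (a k) n‖ * ‖Φ‖ :=
        (weakSection 𝕜 p (a k) n).le_opNorm Φ
    _ ≤ c k * ‖Φ‖ := by gcongr; exact ha k n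

end weakSection

section cohen

variable {𝕜 : Type*} [RCLike 𝕜] {E : Type*} [NormedAddCommGroup E] [NormedSpace 𝕜 E]

lemma norm_apply_le_norm_tsum_apply {ι : Type*} {f : ι → E →L[𝕜] 𝕜} {y : E} (hs : Summable f)
    (hf : ∀ i, f i y = ‖f i y‖) (i : ι) : ‖f i y‖ ≤ ‖(∑' k, f k) y‖ := by
  have happly := (ContinuousLinearMap.apply 𝕜 𝕜 y).map_tsum hs
  have hsy := hs.mapL (ContinuousLinearMap.apply 𝕜 𝕜 y)
  simp only [ContinuousLinearMap.apply_apply] at happly hsy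
  replace hsy := (RCLike.summable_ofReal 𝕜).1 (hsy.congr hf)
  rw [happly, tsum_congr hf, ← RCLike.ofReal_tsum, RCLike.norm_ofReal,
    abs_of_nonneg (tsum_nonneg fun _ => norm_nonneg _)]
  exact hsy.le_tsum i fun _ _ => norm_nonneg _

variable {p : ℝ≥0∞} [Fact (1 ≤ p)]

lemma exists_norm_weakSection_le_one_apply_eq_norm {φ : ℕ → E →L[𝕜] 𝕜}
    (hφ : ∀ n, ‖weakSection 𝕜 p φ n‖ ≤ 1) (x : ℕ → E) :
    ∃ ψ : ℕ → E →L[𝕜] 𝕜, (∀ n, ‖weakSection 𝕜 p ψ n‖ ≤ 1) ∧ ∀ j, ψ j (x j) = ‖φ j (x j)‖ := by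
  choose u hu hux using fun j => RCLike.exists_norm_eq_mul_self (φ j (x j))
  refine ⟨fun j => u j • φ j, fun n => ?_, fun j => by simp [hux]⟩
  calc ‖weakSection 𝕜 p (fun j => u j • φ j) n‖ ≤ 1 * ‖weakSection 𝕜 p φ n‖ :=
        norm_weakSection_smul_le (fun j => (hu j).le) n
    _ ≤ 1 := by rw [one_mul]; exact hφ n

lemma mem_cohenSet_iff (hp : p ≠ ∞) {x : ℕ → E} {r : ℝ} :
    r ∈ cohenSet 𝕜 p.toReal x ↔ ∃ φ : ℕ → E →L[𝕜] 𝕜, (∀ n, ‖weakSection 𝕜 p φ n‖ ≤ 1) ∧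
      ∃ n, r = ∑ j ∈ range n, ‖φ j (x j)‖ := by
  simp only [cohenSet, Set.mem_ofPred_eq, ← and_assoc, weaklySummable_and_weakNorm_le_one_iff hp]

lemma mem_dualSet_iff (hp : p ≠ ∞) {x : ℕ → E} {r : ℝ} :
    r ∈ dualSet 𝕜 p.toReal x ↔ ∃ φ : ℕ → E →L[𝕜] 𝕜, (∀ n, ‖weakSection 𝕜 p φ n‖ ≤ 1) ∧
      ∃ n, r = ‖∑ j ∈ range n, φ j (x j)‖ := by
  simp only [dualSet, Set.mem_ofPred_eq, ← and_assoc, weaklySummable_and_weakNorm_le_one_iff hp]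

theorem sSup_cohenSet_eq_sSup_dualSet (hp : p ≠ ∞) (x : ℕ → E) :
    sSup (cohenSet 𝕜 p.toReal x) = sSup (dualSet 𝕜 p.toReal x) := by
  refine csSup_eq_csSup_of_forall_exists_le (fun r hr => ⟨r, ?_, le_rfl⟩) ?_
  · obtain ⟨φ, hφ, n, rfl⟩ := (mem_cohenSet_iff hp).1 hr
    obtain ⟨ψ, hψ, hψx⟩ := exists_norm_weakSection_le_one_apply_eq_norm hφ x
    refine (mem_dualSet_iff hp).2 ⟨ψ, hψ, n, ?_⟩
    rw [sum_congr rfl fun j _ => hψx j, ← RCLike.ofReal_sum, RCLike.norm_ofReal,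
      abs_of_nonneg (sum_nonneg fun _ _ => norm_nonneg _)]
  · rintro r ⟨φ, hφ, hnorm, n, rfl⟩
    exact ⟨_, ⟨φ, hφ, hnorm, n, rfl⟩, norm_sum_le _ _⟩

theorem summable_of_bddAbove_cohenSet (hp : p ≠ ∞) {x : ℕ → E}
    (hx : BddAbove (cohenSet 𝕜 p.toReal x)) {φ : ℕ → E →L[𝕜] 𝕜}
    (hφ : WeaklySummable 𝕜 p.toReal φ) : Summable fun j => ‖φ j (x j)‖ := by
  obtain ⟨C, hC⟩ := hx
  obtain ⟨M, hM⟩ := (weaklySummable_iff_exists_norm_weakSection_le hp).1 hφ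
  have hM0 : 0 ≤ M := (ContinuousLinearMap.opNorm_nonneg _).trans (hM 0)
  obtain ⟨t, ht0, htM⟩ : ∃ t : ℝ, 0 < t ∧ t * M ≤ 1 :=
    ⟨(M + 1)⁻¹, by positivity, by rw [inv_mul_le_iff₀ (by positivity)]; linarith⟩
  have hball : ∀ n, ‖weakSection 𝕜 p (fun j => (t : 𝕜) • φ j) n‖ ≤ 1 := fun n => calc
    _ ≤ t * ‖weakSection 𝕜 p φ n‖ :=
        norm_weakSection_smul_le (fun _ => by rw [RCLike.norm_ofReal, abs_of_pos ht0]) n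
    _ ≤ t * M := by gcongr; exact hM n
    _ ≤ 1 := htM
  refine summable_of_sum_range_le (c := C / t) (fun _ => norm_nonneg _) fun n => ?_
  have hmem := hC ((mem_cohenSet_iff hp).2 ⟨_, hball, n, rfl⟩)
  simp only [smul_apply, norm_smul, RCLike.norm_ofReal, abs_of_pos ht0, ← mul_sum] at hmem
  rwa [le_div_iff₀' ht0]

lemma exists_apply_eq_norm_sum_gt_of_not_bddAbove (hp : p ≠ ∞) {x : ℕ → E}
    (hx : ¬BddAbove (cohenSet 𝕜 p.toReal x)) (B : ℝ) :
    ∃ ψ : ℕ → E →L[𝕜] 𝕜, (∀ n, ‖weakSection 𝕜 p ψ n‖ ≤ 1) ∧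
      (∀ j, ψ j (x j) = ‖ψ j (x j)‖) ∧ ∃ m, B < ∑ j ∈ range m, ‖ψ j (x j)‖ := by
  obtain ⟨r, hr, hBr⟩ := not_bddAbove_iff.1 hx B
  obtain ⟨φ, hφ, m, rfl⟩ := (mem_cohenSet_iff hp).1 hr
  obtain ⟨ψ, hψ, hψx⟩ := exists_norm_weakSection_le_one_apply_eq_norm hφ x
  have hnorm : ∀ j, ‖ψ j (x j)‖ = ‖φ j (x j)‖ := fun j => by
    rw [hψx, RCLike.norm_ofReal, abs_norm]
  exact ⟨ψ, hψ, fun j => by rw [hnorm, hψx], m, by simpa only [hnorm] using hBr⟩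

theorem bddAbove_cohenSet_of_summable (hp : p ≠ ∞) {x : ℕ → E}
    (hx : ∀ φ : ℕ → E →L[𝕜] 𝕜, WeaklySummable 𝕜 p.toReal φ → Summable fun j => ‖φ j (x j)‖) :
    BddAbove (cohenSet 𝕜 p.toReal x) := by
  by_contra hunbdd
  choose ψ hψ hψx m hm using fun k : ℕ =>
    exists_apply_eq_norm_sum_gt_of_not_bddAbove hp hunbdd (k * 2 ^ k)
  set a : ℕ → ℕ → E →L[𝕜] 𝕜 := fun k j => ((((1 : ℝ) / 2) ^ k : ℝ) : 𝕜) • ψ k j with ha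
  have ha_le : ∀ k n, ‖weakSection 𝕜 p (a k) n‖ ≤ ((1 : ℝ) / 2) ^ k := fun k n => calc
    _ ≤ ((1 : ℝ) / 2) ^ k * ‖weakSection 𝕜 p (ψ k) n‖ :=
        norm_weakSection_smul_le
          (fun _ => by rw [RCLike.norm_ofReal, abs_of_nonneg (by positivity)]) n
    _ ≤ ((1 : ℝ) / 2) ^ k := mul_le_of_le_one_right (by positivity) (hψ k n)
  have hsum := summable_of_norm_weakSection_le summable_geometric_two ha_le
  have hglued := hx _ ((weaklySummable_iff_exists_norm_weakSection_le hp).2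
    ⟨2, norm_weakSection_tsum_le hasSum_geometric_two ha_le⟩)
  obtain ⟨k, hk⟩ := exists_nat_gt (∑' j, ‖(∑' i, a i j) (x j)‖)
  have hak : ∀ i j, a i j (x j) = ‖a i j (x j)‖ := fun i j => by
    rw [ha, smul_apply, hψx, smul_eq_mul, ← RCLike.ofReal_mul,
      RCLike.norm_ofReal, abs_of_nonneg (by positivity)]
  have hkm : (k : ℝ) < ((1 : ℝ) / 2) ^ k * ∑ j ∈ range (m k), ‖ψ k j (x j)‖ := by
    rw [one_div, inv_pow, lt_inv_mul_iff₀ (by positivity), mul_comm]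
    exact hm k
  refine (hk.trans hkm).not_ge ?_
  calc ((1 : ℝ) / 2) ^ k * ∑ j ∈ range (m k), ‖ψ k j (x j)‖
      = ∑ j ∈ range (m k), ‖a k j (x j)‖ := by
        rw [mul_sum]
        refine sum_congr rfl fun j _ => ?_
        rw [ha, smul_apply, norm_smul, RCLike.norm_ofReal,
          abs_of_nonneg (by positivity)]
    _ ≤ ∑ j ∈ range (m k), ‖(∑' i, a i j) (x j)‖ :=
        sum_le_sum fun j _ => norm_apply_le_norm_tsum_apply (hsum j) (fun i => hak i j) k
    _ ≤ ∑' j, ‖(∑' i, a i j) (x j)‖ := hglued.sum_le_tsum _ fun _ _ => norm_nonneg _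

end cohen

theorem stmt_19_general {𝕜 : Type*} [RCLike 𝕜] {E : Type*} [NormedAddCommGroup E]
    [NormedSpace 𝕜 E] (p : ℝ) (hp : 1 < p) (x : ℕ → E) :
    (BddAbove (cohenSet 𝕜 p x) ↔
        ∀ φ : ℕ → (E →L[𝕜] 𝕜), WeaklySummable 𝕜 p φ →
          Summable fun j => ‖(φ j) (x j)‖) ∧
      sSup (cohenSet 𝕜 p x) = sSup (dualSet 𝕜 p x) := by
  obtain ⟨P, hP, hPtop, rfl⟩ : ∃ P : ℝ≥0∞, 1 ≤ P ∧ P ≠ ∞ ∧ P.toReal = p :=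
    ⟨ENNReal.ofReal p, ENNReal.one_le_ofReal.2 hp.le, ENNReal.ofReal_ne_top,
      ENNReal.toReal_ofReal (zero_le_one.trans hp.le)⟩
  have : Fact (1 ≤ P) := ⟨hP⟩
  exact ⟨⟨fun hx _ => summable_of_bddAbove_cohenSet hPtop hx, bddAbove_cohenSet_of_summable hPtop⟩,
    sSup_cohenSet_eq_sSup_dualSet hPtop x⟩

/-- The dual of the class of weakly `p`-summable sequences is the class of Cohen strongly
`p*`-summable sequences (`1 < p < ∞`, `1/p + 1/p* = 1`):
`sup_{(φ_j) ∈ B_{ℓ_p^w(E*)}} ∑_j |φ_j(x_j)| < ∞` iff `x` is Cohen strongly `p*`-summable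
(i.e. `∑_j |φ_j(x_j)| < ∞` for all weakly `p`-summable `(φ_j)` in `E*`), and the two
natural norms coincide. -/
theorem stmt_19 {𝕜 : Type*} [RCLike 𝕜] {E : Type*} [NormedAddCommGroup E]
    [NormedSpace 𝕜 E] [CompleteSpace E] (p q : ℝ) (hp : 1 < p)
    (hpq : 1 / p + 1 / q = 1) (x : ℕ → E) :
    (BddAbove (cohenSet 𝕜 p x) ↔
        ∀ φ : ℕ → (E →L[𝕜] 𝕜), WeaklySummable 𝕜 p φ →
          Summable fun j => ‖(φ j) (x j)‖) ∧
      sSup (cohenSet 𝕜 p x) = sSup (dualSet 𝕜 p x) :=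
  stmt_19_general p hp x
end
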